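/- Suppose R₁, R₂ ∈ SO(3), g ∈ ℝ³, a, ȧ ∈ ℝ³, and f, h ∈ ℝ³ satisfy a − g = R₁ f = R₂ f and ȧ = R₁ h = R₂ h. If the vectors a − g and ȧ are linearly independent, then R₁ = R₂. -/

import Mathlib

open Matrix
attribute [local instance] Matrix.normedAddCommGroup Matrix.normedSpace

/-- The cross-product (skew-symmetric) matrix of `ω`, satisfying `cm ω *ᵥ x = ω ×₃ x`. -/
def cm (ω : Fin 3 → ℝ) : Matrix (Fin 3) (Fin 3) ℝ :=
  !![0, -ω 2, ω 1; ω 2, 0, -ω 0; -ω 1, ω 0, 0]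

/-- `R` is a rotation matrix: orthogonal with determinant 1 (element of SO(3)). -/
def SO3 (R : Matrix (Fin 3) (Fin 3) ℝ) : Prop := Rᵀ * R = 1 ∧ R.det = 1

/-- Euclidean norm on `Fin 3 → ℝ`. -/
noncomputable def enorm3 (x : Fin 3 → ℝ) : ℝ := ‖(WithLp.equiv 2 (Fin 3 → ℝ)).symm x‖

/-
A rotation preserves cross products, so R₁ and R₂, which agree on f and h, also agree on f × h.
Since a − g = R₁ f and ȧ = R₁ h are independent, so are f and h; then f × h ≠ 0, and
det [f × h, f, h] = |f × h|² ≠ 0, so R₁ and R₂ agree on a basis of ℝ³.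
-/

theorem Matrix.cross_mulVec_mulVec {R : Type*} [CommRing R] (A : Matrix (Fin 3) (Fin 3) R)
    (u v : Fin 3 → R) : (A *ᵥ u) ⨯₃ (A *ᵥ v) = A.adjugateᵀ *ᵥ (u ⨯₃ v) := by
  funext i
  fin_cases i <;>
    simp [cross_apply, mulVec, dotProduct, Fin.sum_univ_three, adjugate_fin_three] <;> ring

theorem SO3.adjugate_eq_transpose {R : Matrix (Fin 3) (Fin 3) ℝ} (hR : SO3 R) :
    R.adjugate = Rᵀ := by
  calc R.adjugate = Rᵀ * R * R.adjugate := by rw [hR.1, Matrix.one_mul]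
    _ = Rᵀ := by rw [Matrix.mul_assoc, mul_adjugate, hR.2, one_smul, Matrix.mul_one]

theorem SO3.mulVec_cross {R : Matrix (Fin 3) (Fin 3) ℝ} (hR : SO3 R) (u v : Fin 3 → ℝ) :
    R *ᵥ (u ⨯₃ v) = (R *ᵥ u) ⨯₃ (R *ᵥ v) := by
  rw [cross_mulVec_mulVec, hR.adjugate_eq_transpose, transpose_transpose]

theorem linearIndependent_cross_cons {K : Type*} [Field K] [LinearOrder K] [IsStrictOrderedRing K]
    {u v : Fin 3 → K} (huv : LinearIndependent K ![u, v]) :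
    LinearIndependent K ![u ⨯₃ v, u, v] := by
  apply linearIndependent_rows_of_det_ne_zero
  rw [← triple_product_eq_det]
  exact fun h => crossProduct_ne_zero_iff_linearIndependent.mpr huv (dotProduct_self_eq_zero.mp h)

theorem Matrix.ext_of_mulVec_linearIndependent {K n : Type*} [Field K] [Fintype n] [DecidableEq n]
    {A B : Matrix n n K} {b : n → n → K} (hb : LinearIndependent K b)
    (h : ∀ i, A *ᵥ b i = B *ᵥ b i) : A = B := by
  apply Matrix.toLin'.injective
  exact LinearMap.ext_on_range (hb.span_eq_top_of_card_eq_finrank' (by simp))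
    fun i => by simpa using h i

theorem SO3.ext_of_mulVec_eq {R₁ R₂ : Matrix (Fin 3) (Fin 3) ℝ} (hR₁ : SO3 R₁) (hR₂ : SO3 R₂)
    {u v : Fin 3 → ℝ} (huv : LinearIndependent ℝ ![u, v])
    (hu : R₁ *ᵥ u = R₂ *ᵥ u) (hv : R₁ *ᵥ v = R₂ *ᵥ v) : R₁ = R₂ := by
  refine ext_of_mulVec_linearIndependent (linearIndependent_cross_cons huv) fun i => ?_
  fin_cases i
  · simp [hR₁.mulVec_cross, hR₂.mulVec_cross, hu, hv]
  · exact hu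
  · exact hv

theorem observability_theorem_core (R₁ R₂ : Matrix (Fin 3) (Fin 3) ℝ)
    (hR₁ : SO3 R₁) (hR₂ : SO3 R₂) (g a ad f h : Fin 3 → ℝ)
    (h1 : a - g = R₁ *ᵥ f) (h2 : a - g = R₂ *ᵥ f)
    (h3 : ad = R₁ *ᵥ h) (h4 : ad = R₂ *ᵥ h)
    (hli : LinearIndependent ℝ ![a - g, ad]) : R₁ = R₂ := by
  have hfh : LinearIndependent ℝ ![f, h] := by
    refine LinearIndependent.of_comp (mulVecLin R₁) ?_
    convert hli using 1
    ext i : 1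
    fin_cases i <;> simp [h1, h3]
  exact hR₁.ext_of_mulVec_eq hR₂ hfh (h1 ▸ h2) (h3 ▸ h4)
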